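/- For every quarter-plane p-tandem word w̄, Φ_p(Ψ_p(w̄)) is defined and equals w̄. -/

import Mathlib

/-- Words over the alphabet `Σ_p = {-1, 0, 1, …, p}`. -/
def SigmaWord (p : ℕ) (w : List ℤ) : Prop := ∀ a ∈ w, -1 ≤ a ∧ a ≤ (p : ℤ)

/-- A `p`-Łukasiewicz word: a word over `Σ_p` all of whose prefix sums are
nonnegative and whose total sum is `0`. -/
def Lukasiewicz (p : ℕ) (w : List ℤ) : Prop :=
  SigmaWord p w ∧ (∀ i, 0 ≤ (w.take i).sum) ∧ w.sum = 0

/-- The step set `S_p`: the vectors `(-j, p-j)` for `0 ≤ j ≤ p` together with `(1, -1)`. -/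
def InSp (p : ℕ) (s : ℤ × ℤ) : Prop :=
  s = (1, -1) ∨ ∃ j : ℕ, j ≤ p ∧ s = (-(j : ℤ), (p : ℤ) - (j : ℤ))

/-- A quarter-plane `p`-tandem word: a word over `S_p` all of whose prefix sums
have both coordinates nonnegative. -/
def Tandem (p : ℕ) (w : List (ℤ × ℤ)) : Prop :=
  (∀ a ∈ w, InSp p a) ∧ ∀ i, 0 ≤ ((w.take i).sum).1 ∧ 0 ≤ ((w.take i).sum).2

/-- A word over the alphabet `A_p = { a_{ℓ,m} : ℓ + m ≤ p - 1 }`; letters are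
encoded as pairs `(ℓ, m) : ℕ × ℕ`.  The stack `H` is represented with its most
recently appended (rightmost) letter at the *head* of the list. -/
def HValid (p : ℕ) (H : List (ℕ × ℕ)) : Prop := ∀ x ∈ H, x.1 + x.2 + 1 ≤ p

/-- The forward step map `F`: from an input letter `μ ∈ Σ_p` and a counter
`(H, v)`, produce the new counter together with the output letter in `S_p`;
`none` is the error on the forbidden input `(-1, ε, 0)`.  The stack `H` has its
most recently appended letter at the head of the list. -/
def Fstep (p : ℕ) (μ : ℤ) (H : List (ℕ × ℕ)) (v : ℕ) :
    Option (List (ℕ × ℕ) × ℕ × (ℤ × ℤ)) :=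
  if μ = (p : ℤ) then some (H, v + p, ((0 : ℤ), (p : ℤ)))
  else if 0 ≤ μ then
    -- here `0 ≤ μ ≤ p - 1`
    if v = 0 then some (H, μ.toNat, ((0 : ℤ), (p : ℤ)))
    else some ((μ.toNat, 0) :: H, v - 1, ((1 : ℤ), (-1 : ℤ)))
  else
    -- here `μ = -1`
    match H, v with
    | [], 0 => none
    | [], v' + 1 => some ([], v', ((1 : ℤ), (-1 : ℤ)))
    | (l, m) :: H', 0 => some (H', l, (-(m : ℤ) - 1, (p : ℤ) - (m : ℤ) - 1))
    | (l, m) :: H', v' + 1 =>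
      if l + m + 1 = p then
        some (H', (v' + 1) + l, (-(m : ℤ) - 1, (p : ℤ) - (m : ℤ) - 1))
      else some ((l, m + 1) :: H', v', ((1 : ℤ), (-1 : ℤ)))

/-- The left-to-right process: starting from the counter `(H, v)`, process the
letters of the input word in order, returning the final counter together with
the output word, or `none` if an error occurs. -/
def PhiRun (p : ℕ) : List (ℕ × ℕ) → ℕ → List ℤ →
    Option (List (ℕ × ℕ) × ℕ × List (ℤ × ℤ))
  | H, v, [] => some (H, v, [])
  | H, v, μ :: w =>
    match Fstep p μ H v with
    | none => none
    | some (H', v', a) => (PhiRun p H' v' w).map (fun r => (r.1, r.2.1, a :: r.2.2))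

/-- The partial map `Φ_p`: run the left-to-right process from `(ε, 0)` and
return the output word. -/
def Phi (p : ℕ) (w : List ℤ) : Option (List (ℤ × ℤ)) :=
  (PhiRun p [] 0 w).map (fun r => r.2.2)

/-- The backward step map `B`: from a counter `(H, v)` and a letter `ā ∈ S_p`,
produce the input letter `μ ∈ Σ_p` and the previous counter.  The stack `H` has
its most recently appended letter at the head of the list.  (The value on
letters outside `S_p` is irrelevant junk.) -/
def Bstep (p : ℕ) (H : List (ℕ × ℕ)) (v : ℕ) (a : ℤ × ℤ) :
    ℤ × List (ℕ × ℕ) × ℕ :=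
  if a = ((1 : ℤ), (-1 : ℤ)) then
    match H with
    | [] => (-1, [], v + 1)
    | (l, 0) :: H' => ((l : ℤ), H', v + 1)
    | (l, m + 1) :: H' => (-1, (l, m) :: H', v + 1)
  else if a.1 = 0 then
    -- here `a = (0, p)`
    if v ≤ p - 1 then ((v : ℤ), H, 0) else ((p : ℤ), H, v - p)
  else
    -- here `a = (-m - 1, p - m - 1)` with `0 ≤ m ≤ p - 1`
    let m : ℕ := (-a.1 - 1).toNat
    if v ≤ p - m - 1 then (-1, (v, m) :: H, 0)
    else (-1, (p - m - 1, m) :: H, v - (p - m - 1))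

/-- The right-to-left process: starting from the counter `(ε, 0)` at the right
end of the word, process the letters from right to left, returning the counter
at the left end together with the output word. -/
def PsiRun (p : ℕ) : List (ℤ × ℤ) → List (ℕ × ℕ) × ℕ × List ℤ
  | [] => ([], 0, [])
  | a :: rest =>
    let r := PsiRun p rest
    let s := Bstep p r.1 r.2.1 a
    (s.2.1, s.2.2, s.1 :: r.2.2)

/-- The total map `Ψ_p`. -/
def Psi (p : ℕ) (w : List (ℤ × ℤ)) : List ℤ := (PsiRun p w).2.2

/-- The weight `wt_ℓ`, determined on letters by `wt_ℓ(a_{ℓ,m}) = ℓ + 1`. -/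
def wtl (H : List (ℕ × ℕ)) : ℕ := (H.map (fun x => x.1 + 1)).sum

/-- The weight `wt_m`, determined on letters by `wt_m(a_{ℓ,m}) = m + 1`. -/
def wtm (H : List (ℕ × ℕ)) : ℕ := (H.map (fun x => x.2 + 1)).sum

lemma wtm_cons (l m : ℕ) (H : List (ℕ × ℕ)) : wtm ((l, m) :: H) = m + 1 + wtm H := by
  simp only [wtm, List.map_cons, List.sum_cons]

/-- Key local lemma: `Fstep` inverts `Bstep` on valid configurations. -/
lemma bstep_spec (p : ℕ) (hp : 1 ≤ p) (a : ℤ × ℤ) (ha : InSp p a)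
    (H : List (ℕ × ℕ)) (hH : HValid p H) (v : ℕ) :
    Fstep p (Bstep p H v a).1 (Bstep p H v a).2.1 (Bstep p H v a).2.2 = some (H, v, a) ∧
      HValid p (Bstep p H v a).2.1 := by
  rcases ha with rfl | ⟨j, hj, rfl⟩
  · -- a = (1, -1)
    have h1 : ((1 : ℤ), (-1 : ℤ)) = ((1 : ℤ), (-1 : ℤ)) := rfl
    match H with
    | [] =>
      simp only [Bstep, if_pos h1]
      constructor
      · have hne : ¬((-1 : ℤ) = (p : ℕ)) := by omega
        have hne2 : ¬((0 : ℤ) ≤ -1) := by omega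
        simp [Fstep, hne, hne2]
      · intro x hx; simp at hx
    | (l, 0) :: H' =>
      have hl : l + 0 + 1 ≤ p := hH (l, 0) (by simp)
      simp only [Bstep, if_pos h1]
      constructor
      · have hne : ¬((l : ℤ) = (p : ℕ)) := by
          intro h; have := Int.natCast_inj.mp h; omega
        have hge : (0 : ℤ) ≤ (l : ℤ) := by positivity
        simp [Fstep, hne, hge]
      · intro x hx; exact hH x (List.mem_cons_of_mem _ hx)
    | (l, m + 1) :: H' =>
      have hl : l + (m + 1) + 1 ≤ p := hH (l, m + 1) (by simp)
      simp only [Bstep, if_pos h1]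
      constructor
      · have hne : ¬((-1 : ℤ) = (p : ℕ)) := by omega
        have hne2 : ¬((0 : ℤ) ≤ -1) := by omega
        have hne3 : ¬(l + m + 1 = p) := by omega
        simp [Fstep, hne, hne2, hne3]
      · intro x hx
        rcases List.mem_cons.mp hx with h | h
        · subst h; simpa using by omega
        · exact hH x (List.mem_cons_of_mem _ h)
  · -- a = (-(j : ℤ), (p : ℤ) - (j : ℤ))
    rcases Nat.eq_zero_or_pos j with rfl | hj1
    · -- a = (0, p)
      have hne : ¬((-(0 : ℕ) : ℤ), ((p : ℤ) - (0 : ℕ))) = ((1 : ℤ), (-1 : ℤ)) := by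
        simp
      have hfst : ((-(0 : ℕ) : ℤ), ((p : ℤ) - (0 : ℕ))).1 = 0 := by simp
      simp only [Bstep, if_neg hne, if_pos hfst, if_true]
      rcases le_or_gt v (p - 1) with hv | hv
      · rw [if_pos hv]
        constructor
        · have hvp : ¬((v : ℤ) = (p : ℕ)) := by
            intro h; have := Int.natCast_inj.mp h; omega
          have hge : (0 : ℤ) ≤ (v : ℤ) := by positivity
          simp [Fstep, hvp, hge]
        · exact hH
      · rw [if_neg (by omega)]
        constructor
        · have : ((p : ℕ) : ℤ) = (p : ℤ) := rfl
          simp only [Fstep, if_pos rfl]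
          have hvp : v - p + p = v := by omega
          simp [hvp]
        · exact hH
    · -- j ≥ 1
      have hne : ¬((-(j : ℕ) : ℤ), ((p : ℤ) - (j : ℕ))) = ((1 : ℤ), (-1 : ℤ)) := by
        simp only [Prod.mk.injEq, not_and]
        intro h; omega
      have hfst : ¬(((-(j : ℕ) : ℤ), ((p : ℤ) - (j : ℕ))).1 = 0) := by
        simp only; omega
      have hm : (-((-(j : ℕ) : ℤ), ((p : ℤ) - (j : ℕ))).1 - 1).toNat = j - 1 := by
        simp only; omega
      simp only [Bstep, if_neg hne, if_neg hfst, hm]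
      have hout1 : -((j - 1 : ℕ) : ℤ) - 1 = -(j : ℤ) := by
        push_cast [Nat.cast_sub hj1]; ring
      have hout2 : (p : ℤ) - ((j - 1 : ℕ) : ℤ) - 1 = (p : ℤ) - (j : ℤ) := by
        push_cast [Nat.cast_sub hj1]; ring
      rcases le_or_gt v (p - (j - 1) - 1) with hv | hv
      · rw [if_pos hv]
        constructor
        · have hne2 : ¬((-1 : ℤ) = (p : ℕ)) := by omega
          have hne3 : ¬((0 : ℤ) ≤ -1) := by omega
          simp [Fstep, hne2, hne3, hout1, hout2]
        · intro x hx
          rcases List.mem_cons.mp hx with h | h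
          · subst h; simp only; omega
          · exact hH x h
      · rw [if_neg (by omega)]
        have hvpos : v - (p - (j - 1) - 1) = (v - (p - (j - 1) - 1) - 1) + 1 := by omega
        constructor
        · have hne2 : ¬((-1 : ℤ) = (p : ℕ)) := by omega
          have hne3 : ¬((0 : ℤ) ≤ -1) := by omega
          have heq : p - (j - 1) - 1 + (j - 1) + 1 = p := by omega
          rw [hvpos]
          simp only [Fstep, if_neg hne2, if_neg hne3, if_pos heq]
          have : v - (p - (j - 1) - 1) - 1 + 1 + (p - (j - 1) - 1) = v := by omega
          simp [this, hout1, hout2]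
        · intro x hx
          rcases List.mem_cons.mp hx with h | h
          · subst h; simp only; omega
          · exact hH x h

/-- The backward run preserves the invariants `wtm H ≤ x` and `v ≤ y`. -/
lemma psiRun_bound (p : ℕ) (hp : 1 ≤ p) :
    ∀ (wb : List (ℤ × ℤ)) (x y : ℤ),
      (∀ a ∈ wb, InSp p a) →
      (∀ i, 0 ≤ x + ((wb.take i).sum).1 ∧ 0 ≤ y + ((wb.take i).sum).2) →
      ((wtm (PsiRun p wb).1 : ℤ) ≤ x ∧ ((PsiRun p wb).2.1 : ℤ) ≤ y)
  | [], x, y, _, hpre => by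
      have h0 := hpre 0
      simp only [List.take_nil, List.sum_nil, Prod.fst_zero, Prod.snd_zero, add_zero] at h0
      simp only [PsiRun, wtm, List.map_nil, List.sum_nil, Nat.cast_zero]
      exact ⟨h0.1, h0.2⟩
  | a :: t, x, y, hS, hpre => by
      have IH := psiRun_bound p hp t (x + a.1) (y + a.2)
        (fun b hb => hS b (List.mem_cons_of_mem _ hb))
        (fun i => by
          have h := hpre (i + 1)
          simp only [List.take_succ_cons, List.sum_cons, Prod.fst_add, Prod.snd_add] at h
          constructor <;> [linarith [h.1]; linarith [h.2]])
      have h0 := hpre 0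
      simp only [List.take_zero, List.sum_nil, Prod.fst_zero, Prod.snd_zero, add_zero] at h0
      obtain ⟨hx0, hy0⟩ := h0
      obtain ⟨IH1, IH2⟩ := IH
      have ha := hS a (List.mem_cons_self (a := a) (l := t))
      show (wtm (Bstep p (PsiRun p t).1 (PsiRun p t).2.1 a).2.1 : ℤ) ≤ x ∧
        ((Bstep p (PsiRun p t).1 (PsiRun p t).2.1 a).2.2 : ℤ) ≤ y
      set r := PsiRun p t with hr
      rcases ha with rfl | ⟨j, hj, rfl⟩
      · -- a = (1, -1)
        have IH1' : (wtm r.1 : ℤ) ≤ x + 1 := IH1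
        have IH2' : (r.2.1 : ℤ) ≤ y + -1 := IH2
        clear IH1 IH2
        match hH : r.1 with
        | [] =>
          simp only [Bstep, if_pos rfl, wtm, List.map_nil, List.sum_nil, Nat.cast_zero]
          push_cast
          exact ⟨hx0, by linarith⟩
        | (l, 0) :: H' =>
          rw [hH, wtm_cons] at IH1'
          simp only [Bstep, if_pos rfl]
          push_cast at IH1' ⊢
          exact ⟨by linarith, by linarith⟩
        | (l, m + 1) :: H' =>
          rw [hH, wtm_cons] at IH1'
          simp only [Bstep, if_pos rfl]
          push_cast at IH1'
          refine ⟨?_, ?_⟩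
          · show ((wtm ((l, m) :: H') : ℕ) : ℤ) ≤ x
            rw [wtm_cons]; push_cast; linarith
          · show ((r.2.1 + 1 : ℕ) : ℤ) ≤ y
            push_cast; linarith
      · rcases Nat.eq_zero_or_pos j with rfl | hj1
        · -- a = (0, p)
          have IH1' : (wtm r.1 : ℤ) ≤ x + 0 := IH1
          have IH2' : (r.2.1 : ℤ) ≤ y + (p : ℤ) := by
            have : (r.2.1 : ℤ) ≤ y + ((p : ℤ) - (0:ℕ)) := IH2
            simpa using this
          clear IH1 IH2
          simp only [Nat.cast_zero, neg_zero, sub_zero]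
          have hne : ¬((0 : ℤ), (p : ℤ)) = ((1 : ℤ), (-1 : ℤ)) := by simp
          have hfst : ((0 : ℤ), (p : ℤ)).1 = 0 := rfl
          simp only [Bstep, if_neg hne, if_pos hfst, if_true]
          rcases le_or_gt r.2.1 (p - 1) with hv | hv
          · rw [if_pos hv]
            exact ⟨by simpa using IH1', by simpa using hy0⟩
          · rw [if_neg (show ¬(r.2.1 ≤ p - 1) by omega)]
            refine ⟨by simpa using IH1', ?_⟩
            dsimp only
            omega
        · -- j ≥ 1
          have IH1' : (wtm r.1 : ℤ) ≤ x + -(j : ℤ) := IH1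
          have IH2' : (r.2.1 : ℤ) ≤ y + ((p : ℤ) - (j : ℤ)) := IH2
          clear IH1 IH2
          have hne : ¬((-(j : ℤ)), ((p : ℤ) - (j : ℤ))) = ((1 : ℤ), (-1 : ℤ)) := by
            simp only [Prod.mk.injEq, not_and]; intro h; omega
          have hfst : ¬((-(j : ℤ)), ((p : ℤ) - (j : ℤ))).1 = 0 := by
            simp only; omega
          have hm : (-((-(j : ℤ)), ((p : ℤ) - (j : ℤ))).1 - 1).toNat = j - 1 := by
            simp only; omega
          simp only [Bstep, if_neg hne, if_neg hfst, hm]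
          rcases le_or_gt r.2.1 (p - (j - 1) - 1) with hv | hv
          · rw [if_pos hv]
            refine ⟨?_, by simpa using hy0⟩
            rw [wtm_cons]
            push_cast
            have : ((j - 1 : ℕ) : ℤ) = (j : ℤ) - 1 := by omega
            rw [this]; linarith
          · rw [if_neg (show ¬(r.2.1 ≤ p - (j-1) - 1) by omega)]
            constructor
            · rw [wtm_cons]
              push_cast
              have : ((j - 1 : ℕ) : ℤ) = (j : ℤ) - 1 := by omega
              rw [this]; linarith
            · dsimp only
              omega

lemma psiRun_nil_zero (p : ℕ) (hp : 1 ≤ p) (wb : List (ℤ × ℤ)) (hwb : Tandem p wb) :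
    (PsiRun p wb).1 = [] ∧ (PsiRun p wb).2.1 = 0 := by
  obtain ⟨hS, hpre⟩ := hwb
  have h := psiRun_bound p hp wb 0 0 hS (fun i => by
    have := hpre i; exact ⟨by simpa using this.1, by simpa using this.2⟩)
  constructor
  · match hH : (PsiRun p wb).1 with
    | [] => rfl
    | (l, m) :: H' =>
      exfalso
      rw [hH, wtm_cons] at h
      have := h.1
      push_cast at this
      linarith
  · have := h.2
    omega

lemma phiRun_psiRun (p : ℕ) (hp : 1 ≤ p) :
    ∀ (wb : List (ℤ × ℤ)), (∀ a ∈ wb, InSp p a) →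
      PhiRun p (PsiRun p wb).1 (PsiRun p wb).2.1 (PsiRun p wb).2.2 = some ([], 0, wb) ∧
        HValid p (PsiRun p wb).1
  | [], _ => by
      constructor
      · simp [PsiRun, PhiRun]
      · intro x hx; simp [PsiRun] at hx
  | a :: t, hS => by
      obtain ⟨IH1, IH2⟩ := phiRun_psiRun p hp t (fun b hb => hS b (List.mem_cons_of_mem _ hb))
      have hb := bstep_spec p hp a (hS a (List.mem_cons_self (a := a) (l := t))) (PsiRun p t).1 IH2 (PsiRun p t).2.1
      refine ⟨?_, hb.2⟩
      show PhiRun p (Bstep p (PsiRun p t).1 (PsiRun p t).2.1 a).2.1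
          (Bstep p (PsiRun p t).1 (PsiRun p t).2.1 a).2.2
          ((Bstep p (PsiRun p t).1 (PsiRun p t).2.1 a).1 :: (PsiRun p t).2.2)
          = some ([], 0, a :: t)
      rw [PhiRun, hb.1]
      simp [IH1]

theorem phi_psi_eq_id_on_tandem (p : ℕ) (hp : 1 ≤ p)
    (wb : List (ℤ × ℤ)) (hwb : Tandem p wb) :
    Phi p (Psi p wb) = some wb := by
  obtain ⟨h1, h2⟩ := psiRun_nil_zero p hp wb hwb
  have h := (phiRun_psiRun p hp wb hwb.1).1
  rw [h1, h2] at h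
  simp [Phi, Psi, h]
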